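/- arXiv:2401.17208 — 2 statements merged into one kernel-verified Lean document; each statement's English description precedes it below -/
import Mathlib

section
/- For integers d ≥ 1, m ≥ 0, r ≥ 1 with m + 1 ≤ d, the counting function ℘(d,m,r) defined as the alternating sum ∑_{i=1}^{j} (-1)^{i+1} · C(m+n+1−i·d, m+r+i+1−i·d) · C(m+r+i−i·d, r+i) over the appropriate range is zero; that is, when m + 1 ≤ d there are no independent twisted r-forms of degree m invariant by a degree-d one-dimensional foliation. -/
/-- Integer binomial coefficient with the convention `C(a,b) = 0` if `b < 0` or `a < b`. -/
def intChoose (a b : ℤ) : ℤ :=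
  if 0 ≤ b ∧ b ≤ a then ((a.toNat).choose b.toNat : ℤ) else 0

theorem intChoose_eq_zero_of_lt {a b : ℤ} (h : a < b) : intChoose a b = 0 :=
  if_neg fun ⟨_, hba⟩ => (h.trans_le hba).false

theorem wp_vanishes_of_le_general (n r j : ℕ) (d m : ℤ)
    (hd : 1 ≤ d) (hmd : m + 1 ≤ d) :
    ∑ i ∈ Finset.Icc 1 j,
      (-1 : ℤ) ^ (i + 1) *
        intChoose (m + (n : ℤ) + 1 - (i : ℤ) * d) (m + (r : ℤ) + (i : ℤ) + 1 - (i : ℤ) * d) *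
        intChoose (m + (r : ℤ) + (i : ℤ) - (i : ℤ) * d) ((r : ℤ) + (i : ℤ)) = 0 := by
  refine Finset.sum_eq_zero fun i hi_mem => ?_
  have hi : (1 : ℤ) ≤ i := by exact_mod_cast (Finset.mem_Icc.mp hi_mem).1
  have hm_lt : m < i * d :=
    calc m < d := by omega
      _ ≤ i * d := le_mul_of_one_le_left (by omega) hi
  have htop_lt : m + (r : ℤ) + (i : ℤ) - (i : ℤ) * d < (r : ℤ) + (i : ℤ) := by omega
  rw [intChoose_eq_zero_of_lt htop_lt, mul_zero]

/-- Base case of Theorem 1.1: if `m + 1 ≤ d` then the alternating sum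
`∑_{i=1}^{j} (-1)^{i+1} C(m+n+1-id, m+r+i+1-id) C(m+r+i-id, r+i)` defining the counting
function `℘(d,m,r)` vanishes; there are no independent twisted `r`-forms of degree `m`
invariant by a degree-`d` one-dimensional foliation. -/
theorem wp_vanishes_of_le (n r j : ℕ) (d m : ℤ)
    (hr : 1 ≤ r) (hd : 1 ≤ d) (hm : 0 ≤ m) (hmd : m + 1 ≤ d) :
    ∑ i ∈ Finset.Icc 1 j,
      (-1 : ℤ) ^ (i + 1) *
        intChoose (m + (n : ℤ) + 1 - (i : ℤ) * d) (m + (r : ℤ) + (i : ℤ) + 1 - (i : ℤ) * d) *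
        intChoose (m + (r : ℤ) + (i : ℤ) - (i : ℤ) * d) ((r : ℤ) + (i : ℤ)) = 0 :=
  wp_vanishes_of_le_general n r j d m hd hmd
end

section
/- Stability of pull-backs (Corollary 6.6, arithmetic core): suppose deg G = m(k+n−1) − (n−1) and every tangent vector field X (with reduced part X₀, deg X₀ ≤ deg X, deg X₀ ≥ 1) satisfies deg G ≤ ((k+n−1)/d)·(deg X₀ + 1) − (n−1). If n − 2 ≤ 2d − k − 1 (equivalently k + n − 1 ≤ 2d), then deg G ≤ 2·deg X when n = 3, and deg G < 2·deg X when n > 3. -/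
/-! Since `(k + n - 1)/d ≤ 2`, the bound on `deg G` gives `deg G ≤ 2 (deg X₀ + 1) - (n - 1)
= 2 deg X₀ - (n - 3)`; with `deg X₀ ≤ deg X` this is `≤ 2 deg X` for `n = 3` and `< 2 deg X`
for `n > 3`. -/

lemma le_two_mul_sub_of_le_div_mul_sub {K : Type*} [Field K] [LinearOrder K]
    [IsStrictOrderedRing K] {g a d x c : K} (hd : 0 < d) (had : a ≤ 2 * d) (hx : 0 ≤ x)
    (hg : g ≤ a / d * x - c) : g ≤ 2 * x - c :=
  hg.trans (sub_le_sub_right (mul_le_mul_of_nonneg_right ((div_le_iff₀ hd).2 had) hx) c)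

theorem pullback_stability_general (n : ℕ) (k d degG : ℤ)
    (hd : 1 ≤ d)
    (Tangent : ℤ → ℤ → Prop)
    (hbound : ∀ degX degX0, Tangent degX degX0 →
      1 ≤ degX0 ∧ degX0 ≤ degX ∧
        (degG : ℚ) ≤ ((k + (n : ℤ) - 1 : ℤ) : ℚ) / (d : ℚ) * ((degX0 : ℚ) + 1)
          - ((n : ℚ) - 1))
    (hkd : k + (n : ℤ) - 1 ≤ 2 * d) :
    ∀ degX degX0, Tangent degX degX0 →
      (n = 3 → (degG : ℚ) ≤ 2 * (degX : ℚ)) ∧ (3 < n → (degG : ℚ) < 2 * (degX : ℚ)) := by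
  intro degX degX0 hX
  obtain ⟨hX0_pos, hX0_le, hG_le⟩ := hbound degX degX0 hX
  have hX0_pos' : (0 : ℚ) ≤ degX0 + 1 := by exact_mod_cast (by omega : (0 : ℤ) ≤ degX0 + 1)
  have hX0_le' : (degX0 : ℚ) ≤ degX := by exact_mod_cast hX0_le
  have hslope : (degG : ℚ) ≤ 2 * ((degX0 : ℚ) + 1) - ((n : ℚ) - 1) :=
    le_two_mul_sub_of_le_div_mul_sub (Int.cast_pos.2 (by omega)) (by exact_mod_cast hkd)
      hX0_pos' hG_le
  refine ⟨fun hn3 => ?_, fun hn3 => ?_⟩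
  · subst hn3
    push_cast at hslope
    linarith
  · have : (4 : ℚ) ≤ n := by exact_mod_cast hn3
    linarith

/-- Corollary 6.6 (arithmetic core): suppose `deg G = m(k+n-1) - (n-1)` and every tangent
vector field `X` (with reduced part `X₀`, `1 ≤ deg X₀ ≤ deg X`) satisfies
`deg G ≤ ((k+n-1)/d)·(deg X₀ + 1) - (n-1)`.  If `n - 2 ≤ 2d - k - 1` (equivalently
`k + n - 1 ≤ 2d`), then `deg G ≤ 2·deg X` when `n = 3` (semistability) and
`deg G < 2·deg X` when `n > 3` (stability). -/
theorem pullback_stability (n : ℕ) (hn : 3 ≤ n) (m k d degG : ℤ)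
    (hm : 1 ≤ m) (hk : 0 ≤ k) (hd : 1 ≤ d)
    (hG : degG = m * (k + (n : ℤ) - 1) - ((n : ℤ) - 1))
    (Tangent : ℤ → ℤ → Prop)
    (hbound : ∀ degX degX0, Tangent degX degX0 →
      1 ≤ degX0 ∧ degX0 ≤ degX ∧
        (degG : ℚ) ≤ ((k + (n : ℤ) - 1 : ℤ) : ℚ) / (d : ℚ) * ((degX0 : ℚ) + 1)
          - ((n : ℚ) - 1))
    (hkd : k + (n : ℤ) - 1 ≤ 2 * d) :
    ∀ degX degX0, Tangent degX degX0 →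
      (n = 3 → (degG : ℚ) ≤ 2 * (degX : ℚ)) ∧ (3 < n → (degG : ℚ) < 2 * (degX : ℚ)) :=
  pullback_stability_general n k d degG hd Tangent hbound hkd
end
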